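/- Fix b > 0 and positive weights a_1,…,a_T > 0. For every t with 1 ≤ t ≤ T, with ŷ_t = b_{t−1}ᵀ A_{t−1}^{−1} x_t, the following per-round identity holds: (y_t − ŷ_t)² + inf_{u ∈ ℝ^d} ( b‖u‖² + Σ_{s=1}^{t−1} a_s (y_s − uᵀx_s)² ) − inf_{u ∈ ℝ^d} ( b‖u‖² + Σ_{s=1}^{t} a_s (y_s − uᵀx_s)² ) = ((1 + a_t x_tᵀ A_{t−1}^{−1} x_t − a_t)/(1 + a_t x_tᵀ A_{t−1}^{−1} x_t)) · (y_t − ŷ_t)². -/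

import Mathlib

/-!
The regularized weighted loss `u ↦ b‖u‖² + ∑ₛ aₛ (yₛ - u ⬝ xₛ)²` is the quadratic
`uᵀ Aₙ u - 2 bₙᵀ u + ∑ₛ aₛ yₛ²`, whose minimum is `∑ₛ aₛ yₛ² - bₙᵀ Aₙ⁻¹ bₙ`, attained at
`Aₙ⁻¹ bₙ`. Going from round `t - 1` to round `t` is a rank-one update `A + aₜ xₜ xₜᵀ`, and
Sherman–Morrison gives the new minimiser explicitly; the minimum then rises by exactly
`aₜ (yₜ - ŷₜ)² / (1 + aₜ xₜᵀ Aₜ₋₁⁻¹ xₜ)`, which subtracted from `(yₜ - ŷₜ)²` is the claim.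
-/

open Matrix Finset

section Quadratic

variable {n : Type*} [Fintype n]

lemma Matrix.PosSemidef.dotProduct_mulVec_comm {M : Matrix n n ℝ} (hM : M.PosSemidef)
    (u w : n → ℝ) : u ⬝ᵥ (M *ᵥ w) = w ⬝ᵥ (M *ᵥ u) := by
  have hMt : Mᵀ = M := by simpa [conjTranspose_eq_transpose_of_trivial] using hM.isHermitian.eq
  rw [dotProduct_mulVec, ← hMt, vecMul_transpose, hMt, dotProduct_comm]

lemma Matrix.PosSemidef.one_add_mul_dotProduct_pos {M : Matrix n n ℝ} (hM : M.PosSemidef)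
    {α : ℝ} (hα : 0 ≤ α) {v w : n → ℝ} (hw : M *ᵥ w = v) : 0 < 1 + α * (v ⬝ᵥ w) := by
  have hvw : 0 ≤ v ⬝ᵥ w := by simpa [← hw, dotProduct_comm] using hM.dotProduct_mulVec_nonneg w
  linarith [mul_nonneg hα hvw]

lemma Matrix.PosSemidef.iInf_dotProduct_mulVec_sub {M : Matrix n n ℝ} (hM : M.PosSemidef)
    {c u₀ : n → ℝ} (hu₀ : M *ᵥ u₀ = c) (C : ℝ) :
    ⨅ u, (u ⬝ᵥ (M *ᵥ u) - 2 * (c ⬝ᵥ u) + C) = C - c ⬝ᵥ u₀ := by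
  have hsq : ∀ u, u ⬝ᵥ (M *ᵥ u) - 2 * (c ⬝ᵥ u) + C
      = (u - u₀) ⬝ᵥ (M *ᵥ (u - u₀)) + (C - c ⬝ᵥ u₀) := fun u => by
    have hcross : u₀ ⬝ᵥ (M *ᵥ u) = c ⬝ᵥ u := by
      rw [hM.dotProduct_mulVec_comm, hu₀, dotProduct_comm]
    rw [mulVec_sub, dotProduct_sub, sub_dotProduct, sub_dotProduct, hcross, hu₀,
      dotProduct_comm u c, dotProduct_comm u₀ c]
    ring
  have hge : ∀ u, C - c ⬝ᵥ u₀ ≤ u ⬝ᵥ (M *ᵥ u) - 2 * (c ⬝ᵥ u) + C := fun u => by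
    simpa [hsq u] using hM.dotProduct_mulVec_nonneg (u - u₀)
  refine le_antisymm ?_ (le_ciInf hge)
  calc _ ≤ u₀ ⬝ᵥ (M *ᵥ u₀) - 2 * (c ⬝ᵥ u₀) + C := ciInf_le ⟨_, Set.forall_mem_range.2 hge⟩ u₀
    _ = C - c ⬝ᵥ u₀ := by simp [hsq u₀]

lemma Matrix.PosSemidef.iInf_add_vecMulVec {M : Matrix n n ℝ} (hM : M.PosSemidef)
    {α : ℝ} (hα : 0 ≤ α) {c u₀ v w : n → ℝ} (hu₀ : M *ᵥ u₀ = c) (hw : M *ᵥ w = v)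
    (β C : ℝ) :
    ⨅ u, (u ⬝ᵥ ((M + α • vecMulVec v v) *ᵥ u) - 2 * ((c + (α * β) • v) ⬝ᵥ u)
        + (C + α * β ^ 2))
      = (⨅ u, (u ⬝ᵥ (M *ᵥ u) - 2 * (c ⬝ᵥ u) + C))
        + α * (β - c ⬝ᵥ w) ^ 2 / (1 + α * (v ⬝ᵥ w)) := by
  have hr := hM.one_add_mul_dotProduct_pos hα hw
  have hp : v ⬝ᵥ u₀ = c ⬝ᵥ w := by
    rw [← hw, ← hu₀, dotProduct_comm, hM.dotProduct_mulVec_comm, dotProduct_comm]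
  -- Sherman–Morrison: the minimiser moves from `u₀` to `u₀ + k • w`.
  set k := α * (β - c ⬝ᵥ w) / (1 + α * (v ⬝ᵥ w))
  have hM' : (M + α • vecMulVec v v).PosSemidef :=
    hM.add ((posSemidef_vecMulVec_self_star v).smul hα)
  have hu' : (M + α • vecMulVec v v) *ᵥ (u₀ + k • w) = c + (α * β) • v := by
    have hk : k + α * (c ⬝ᵥ w + k * (v ⬝ᵥ w)) = α * β := by
      simp only [k]; field_simp; ring
    rw [add_mulVec, smul_mulVec, vecMulVec_mulVec, op_smul_eq_smul, mulVec_add, mulVec_smul,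
      hu₀, hw, dotProduct_add, dotProduct_smul, hp, smul_eq_mul, smul_smul, add_assoc,
      ← add_smul, hk]
  rw [hM'.iInf_dotProduct_mulVec_sub hu', hM.iInf_dotProduct_mulVec_sub hu₀]
  simp only [add_dotProduct, dotProduct_add, smul_dotProduct, dotProduct_smul, smul_eq_mul]
  rw [hp]
  simp only [k]; field_simp; ring

end Quadratic

section RegularizedLoss

variable {ι n : Type*} [Fintype n] [DecidableEq n]

lemma regularized_loss_eq_quadratic (b : ℝ) (S : Finset ι) (a y : ι → ℝ) (x : ι → n → ℝ)
    (u : n → ℝ) :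
    b * (u ⬝ᵥ u) + ∑ s ∈ S, a s * (y s - u ⬝ᵥ x s) ^ 2
      = u ⬝ᵥ ((b • 1 + ∑ s ∈ S, a s • vecMulVec (x s) (x s)) *ᵥ u)
        - 2 * ((∑ s ∈ S, (a s * y s) • x s) ⬝ᵥ u) + ∑ s ∈ S, a s * y s ^ 2 := by
  rw [add_mulVec, smul_mulVec, one_mulVec, sum_mulVec, dotProduct_add, dotProduct_smul,
    dotProduct_sum, sum_dotProduct, smul_eq_mul, mul_sum, add_sub_assoc, add_assoc,
    ← sum_sub_distrib, ← sum_add_distrib]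
  congr 1
  refine sum_congr rfl fun s _ => ?_
  rw [smul_mulVec, vecMulVec_mulVec, op_smul_eq_smul, smul_smul, dotProduct_smul,
    smul_dotProduct, smul_eq_mul, smul_eq_mul, dotProduct_comm (x s) u]
  ring

lemma posDef_smul_one_add_sum_smul_vecMulVec {b : ℝ} (hb : 0 < b) {S : Finset ι} {a : ι → ℝ}
    (ha : ∀ s ∈ S, 0 ≤ a s) (x : ι → n → ℝ) :
    (b • 1 + ∑ s ∈ S, a s • vecMulVec (x s) (x s)).PosDef :=
  (PosDef.one.smul hb).add_posSemidef <|
    posSemidef_sum S fun s hs => (posSemidef_vecMulVec_self_star (x s)).smul (ha s hs)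

end RegularizedLoss

/-- the per-round identity
`(y_t − ŷ_t)² + inf_u (b‖u‖² + L_{t−1}^a(u)) − inf_u (b‖u‖² + L_t^a(u))
   = ((1 + a_t x_tᵀA_{t−1}⁻¹x_t − a_t)/(1 + a_t x_tᵀA_{t−1}⁻¹x_t))·(y_t − ŷ_t)²`,
where `ŷ_t = b_{t−1}ᵀ A_{t−1}⁻¹ x_t`. -/
theorem stmt_5 {d T : ℕ} (b : ℝ) (hb : 0 < b)
    (a : ℕ → ℝ) (ha : ∀ s ∈ Icc 1 T, 0 < a s)
    (x : ℕ → (Fin d → ℝ)) (y : ℕ → ℝ)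
    (A : ℕ → Matrix (Fin d) (Fin d) ℝ)
    (hA : ∀ t, A t = b • (1 : Matrix (Fin d) (Fin d) ℝ)
        + ∑ s ∈ Icc 1 t, a s • vecMulVec (x s) (x s))
    (Bv : ℕ → (Fin d → ℝ))
    (hBv : ∀ t, Bv t = ∑ s ∈ Icc 1 t, (a s * y s) • x s)
    (t : ℕ) (ht : t ∈ Icc 1 T)
    (yhat : ℝ) (hyhat : yhat = Bv (t - 1) ⬝ᵥ ((A (t - 1))⁻¹ *ᵥ x t)) :
    (y t - yhat) ^ 2
      + (⨅ u : Fin d → ℝ,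
          (b * (u ⬝ᵥ u) + ∑ s ∈ Icc 1 (t - 1), a s * (y s - u ⬝ᵥ x s) ^ 2))
      - (⨅ u : Fin d → ℝ,
          (b * (u ⬝ᵥ u) + ∑ s ∈ Icc 1 t, a s * (y s - u ⬝ᵥ x s) ^ 2))
      = ((1 + a t * (x t ⬝ᵥ ((A (t - 1))⁻¹ *ᵥ x t)) - a t)
          / (1 + a t * (x t ⬝ᵥ ((A (t - 1))⁻¹ *ᵥ x t)))) * (y t - yhat) ^ 2 := by
  obtain ⟨ht1, htT⟩ := mem_Icc.mp ht
  obtain ⟨m, rfl⟩ := Nat.exists_eq_add_of_le' ht1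
  simp only [Nat.add_sub_cancel] at hyhat ⊢
  have ha' : ∀ s ∈ Icc 1 (m + 1), 0 ≤ a s := fun s hs => (ha s (Icc_subset_Icc_right htT hs)).le
  have hα : 0 ≤ a (m + 1) := ha' _ (right_mem_Icc.2 (by omega))
  have hAm : (A m).PosDef := hA m ▸ posDef_smul_one_add_sum_smul_vecMulVec hb
    (fun s hs => ha' s (Icc_subset_Icc_right m.le_succ hs)) x
  have hinv : ∀ z, A m *ᵥ ((A m)⁻¹ *ᵥ z) = z := fun z => by
    rw [mulVec_mulVec, mul_nonsing_inv _ ((isUnit_iff_isUnit_det _).mp hAm.isUnit), one_mulVec]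
  have hloss : ∀ k (u : Fin d → ℝ), b * (u ⬝ᵥ u) + ∑ s ∈ Icc 1 k, a s * (y s - u ⬝ᵥ x s) ^ 2
      = u ⬝ᵥ (A k *ᵥ u) - 2 * (Bv k ⬝ᵥ u) + ∑ s ∈ Icc 1 k, a s * y s ^ 2 := fun k u => by
    rw [hA, hBv, regularized_loss_eq_quadratic]
  have hA' : A (m + 1) = A m + a (m + 1) • vecMulVec (x (m + 1)) (x (m + 1)) := by
    rw [hA, hA, sum_Icc_succ_top (by omega), add_assoc]
  have hBv' : Bv (m + 1) = Bv m + (a (m + 1) * y (m + 1)) • x (m + 1) := by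
    rw [hBv, hBv, sum_Icc_succ_top (by omega)]
  simp only [hloss, hA', hBv']
  rw [sum_Icc_succ_top (by omega : 1 ≤ m + 1),
    hAm.posSemidef.iInf_add_vecMulVec hα (hinv (Bv m)) (hinv (x (m + 1))), ← hyhat]
  have hden := hAm.posSemidef.one_add_mul_dotProduct_pos hα (hinv (x (m + 1)))
  field_simp
  ring
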